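/- For every natural number n > 1 and every real number x with p_n < x < p_{n+1}^2 (where p_k denotes the k-th prime), the equality Υ_n(x) = π(x) holds, where π(x) is the number of primes less than or equal to x. -/

import Mathlib

open Finset

/-- `p k` is the `k`-th prime (1-indexed): `p 1 = 2`, `p 2 = 3`, `p 3 = 5`, ... -/
noncomputable def nthPrime (k : ℕ) : ℕ := Nat.nth Nat.Prime (k - 1)

/-- `σ_{n,m}(x) = Σ_{1 ≤ k₁ < ⋯ < k_m ≤ n} ⌊x / (p_{k₁} ⋯ p_{k_m})⌋`, realized as a sum
over the `m`-element subsets of `{1, …, n}`. -/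
noncomputable def sigma' (n m : ℕ) (x : ℝ) : ℤ :=
  ∑ s ∈ (Finset.Icc 1 n).powersetCard m, ⌊x / ∏ i ∈ s, (nthPrime i : ℝ)⌋

/-- `γ_{n,m}(x)` defined by downward recursion:
`γ_{n,m}(x) = σ_{n,m}(x) − Σ_{k=m+1}^{n} C(k,m) · γ_{n,k}(x)`
(in particular `γ_{n,n}(x) = σ_{n,n}(x)`). -/
noncomputable def gamma' (n m : ℕ) (x : ℝ) : ℤ :=
  sigma' n m x -
    ∑ k ∈ (Finset.Icc (m + 1) n).attach, (Nat.choose k.1 m : ℤ) * gamma' n k.1 x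
termination_by n - m
decreasing_by
  have hk := Finset.mem_Icc.mp k.2
  omega

/-- `Υ_n(x) = ⌊x⌋ − σ_{n,1}(x) + Σ_{k=2}^{n} (k−1)·γ_{n,k}(x) + n − 1`. -/
noncomputable def upsilon (n : ℕ) (x : ℝ) : ℤ :=
  ⌊x⌋ - sigma' n 1 x + ∑ k ∈ Finset.Icc 2 n, ((k : ℤ) - 1) * gamma' n k x + n - 1

/-- `π(x)`: the number of primes `p` with `p ≤ x`. -/
noncomputable def primePi (x : ℝ) : ℕ := ((Finset.range (⌊x⌋₊ + 1)).filter Nat.Prime).card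

/-!
Fix `0 ≤ x`, put `N = ⌊x⌋` and let `ω(j)` be the number of primes among `p_1, …, p_n`
dividing `j`. Counting multiples gives `σ_{n,m}(x) = ∑_{j ≤ N} C(ω(j), m)`, so the recursion
defining `γ_{n,m}` is binomial inversion: `γ_{n,m}(x)` is the number of `j ≤ N` with
`ω(j) = m`. As `1 - w + [w ≥ 2] (w - 1) = [w = 0]`, `Υ_n(x)` collapses to
`#{j ≤ N | ω(j) = 0} + n - 1`. If `p_n < x < p_{n+1}^2`, an integer `1 < j ≤ N` with
`ω(j) = 0` has least prime factor at least `p_{n+1} > √N`, so it is prime; these `j` are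
thus `1` and the primes in `(p_n, N]`.
-/

namespace Finset

theorem sum_powersetCard_card_filter_subset {ι α : Type*} [DecidableEq ι] (I : Finset ι)
    (J : Finset α) (T : α → Finset ι) (hT : ∀ j ∈ J, T j ⊆ I) (m : ℕ) :
    ∑ s ∈ I.powersetCard m, #{j ∈ J | s ⊆ T j} = ∑ j ∈ J, (#(T j)).choose m := by
  simp only [card_filter]
  rw [sum_comm]
  refine sum_congr rfl fun j hj => ?_
  rw [← card_filter, ← card_powersetCard]
  congr 1
  ext s
  simp only [mem_filter, mem_powersetCard]
  exact ⟨fun h => ⟨h.2, h.1.2⟩, fun h => ⟨⟨h.1.trans (hT j hj), h.2⟩, h.1⟩⟩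

theorem sum_mul_card_filter_eq {α : Type*} (J : Finset α) (g : α → ℕ) (K : Finset ℕ)
    (f : ℕ → ℤ) :
    ∑ k ∈ K, f k * #{j ∈ J | g j = k} = ∑ j ∈ J, if g j ∈ K then f (g j) else 0 := by
  simp only [natCast_card_filter, mul_sum, mul_ite, mul_one, mul_zero]
  rw [sum_comm]
  exact sum_congr rfl fun j _ => sum_ite_eq K (g j) f

end Finset

theorem Int.floor_div_natCast_eq_card_filter_dvd {k : Type*} [Field k] [LinearOrder k]
    [IsOrderedRing k] [FloorRing k] {x : k} (hx : 0 ≤ x) (d : ℕ) :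
    ⌊x / d⌋ = #{j ∈ Ioc 0 ⌊x⌋₊ | d ∣ j} := by
  rw [Int.floor_div_natCast, Nat.Ioc_filter_dvd_card_eq_div, ← Int.natCast_floor_eq_floor hx]
  push_cast
  rfl

theorem Nat.prime_of_lt_minFac_sq {j : ℕ} (hj : 1 < j) (h : j < j.minFac ^ 2) : j.Prime := by
  by_contra hnp
  exact (Nat.minFac_sq_le_self (by omega) hnp).not_gt h

lemma nthPrime_prime (k : ℕ) : (nthPrime k).Prime := Nat.prime_nth_prime _

lemma nthPrime_monotone : Monotone nthPrime := fun _ _ h =>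
  Nat.nth_monotone Nat.infinite_setOfPred_prime (Nat.sub_le_sub_right h 1)

lemma nthPrime_injOn : Set.InjOn nthPrime (Set.Ici 1) := fun k hk l hl h => by
  have := Nat.nth_injective Nat.infinite_setOfPred_prime h
  simp only [Set.mem_Ici] at hk hl
  omega

lemma exists_nthPrime_eq_of_le {q n : ℕ} (hq : q.Prime) (hn : 1 ≤ n) (h : q ≤ nthPrime n) :
    ∃ k ∈ Icc 1 n, nthPrime k = q := by
  have hcount : Nat.count Nat.Prime q ≤ n - 1 :=
    (Nat.count_le_iff_le_nth Nat.infinite_setOfPred_prime).mpr h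
  refine ⟨Nat.count Nat.Prime q + 1, mem_Icc.mpr ⟨by omega, by omega⟩, ?_⟩
  simpa [nthPrime] using Nat.nth_count hq

lemma nthPrime_succ_le_of_lt {q n : ℕ} (hq : q.Prime) (h : nthPrime n < q) :
    nthPrime (n + 1) ≤ q := by
  have hcount : n - 1 < Nat.count Nat.Prime q :=
    (Nat.lt_nth_iff_count_lt Nat.infinite_setOfPred_prime).mpr h
  calc nthPrime (n + 1) ≤ Nat.nth Nat.Prime (Nat.count Nat.Prime q) :=
        Nat.nth_monotone Nat.infinite_setOfPred_prime (by omega)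
    _ = q := Nat.nth_count hq

lemma primeCounting_nthPrime {n : ℕ} (hn : 1 ≤ n) : Nat.primeCounting (nthPrime n) = n := by
  rw [Nat.primeCounting, Nat.primeCounting', nthPrime,
    Nat.count_nth_succ_of_infinite Nat.infinite_setOfPred_prime]
  omega

theorem primeCounting_eq_add_card {n N : ℕ} (hn : 1 ≤ n) (hN : nthPrime n ≤ N) :
    Nat.primeCounting N = n + #{q ∈ Ioc (nthPrime n) N | q.Prime} := by
  have hsplit :
      Nat.primesLE N = Nat.primesLE (nthPrime n) ∪ {q ∈ Ioc (nthPrime n) N | q.Prime} := by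
    rw [Nat.primesLE_eq_filter_Ioc_zero, Nat.primesLE_eq_filter_Ioc_zero, ← filter_union,
      Ioc_union_Ioc_eq_Ioc (Nat.zero_le _) hN]
  have hdisj : Disjoint (Nat.primesLE (nthPrime n)) {q ∈ Ioc (nthPrime n) N | q.Prime} := by
    rw [Nat.primesLE_eq_filter_Ioc_zero]
    exact disjoint_filter_filter (Ioc_disjoint_Ioc_of_le le_rfl)
  rw [← Nat.primesLE_card_eq_primeCounting, hsplit, card_union_of_disjoint hdisj,
    Nat.primesLE_card_eq_primeCounting, primeCounting_nthPrime hn]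

/-- `#(dvdIndices n j)` is `ω(j)`. -/
noncomputable def dvdIndices (n j : ℕ) : Finset ℕ := {k ∈ Icc 1 n | nthPrime k ∣ j}

lemma card_dvdIndices_le (n j : ℕ) : #(dvdIndices n j) ≤ n :=
  (card_filter_le _ _).trans_eq (by simp)

lemma prod_nthPrime_dvd_iff {n j : ℕ} {s : Finset ℕ} (hs : s ⊆ Icc 1 n) :
    ∏ i ∈ s, nthPrime i ∣ j ↔ s ⊆ dvdIndices n j := by
  have hcoprime : (s : Set ℕ).Pairwise fun i l => IsRelPrime (nthPrime i) (nthPrime l) := by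
    intro i hi l hl hil
    refine Nat.coprime_iff_isRelPrime.mp ((Nat.coprime_primes (nthPrime_prime i)
      (nthPrime_prime l)).mpr fun h => hil (nthPrime_injOn ?_ ?_ h))
    · exact (mem_Icc.mp (hs hi)).1
    · exact (mem_Icc.mp (hs hl)).1
  refine ⟨fun h i hi => mem_filter.mpr ⟨hs hi, (dvd_prod_of_mem _ hi).trans h⟩,
    fun h => prod_dvd_of_isRelPrime hcoprime fun i hi => (mem_filter.mp (h hi)).2⟩

theorem sigma'_eq_sum_choose {x : ℝ} (hx : 0 ≤ x) (n m : ℕ) :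
    sigma' n m x = ∑ j ∈ Ioc 0 ⌊x⌋₊, ((#(dvdIndices n j)).choose m : ℤ) := by
  have hterm : ∀ s ∈ (Icc 1 n).powersetCard m, ⌊x / ∏ i ∈ s, (nthPrime i : ℝ)⌋
      = #{j ∈ Ioc 0 ⌊x⌋₊ | s ⊆ dvdIndices n j} := by
    intro s hs
    rw [← Nat.cast_prod, Int.floor_div_natCast_eq_card_filter_dvd hx]
    simp_rw [prod_nthPrime_dvd_iff (mem_powersetCard.mp hs).1]
  rw [sigma', sum_congr rfl hterm, ← Nat.cast_sum, sum_powersetCard_card_filter_subset]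
  · push_cast; rfl
  · exact fun j _ => filter_subset _ _

lemma choose_sub_ite_eq {w n m : ℕ} (hw : w ≤ n) :
    (w.choose m : ℤ) - (if w ∈ Icc (m + 1) n then (w.choose m : ℤ) else 0)
      = if w = m then 1 else 0 := by
  rcases lt_trichotomy w m with h | rfl | h
  · simp [Nat.choose_eq_zero_of_lt h, h.ne]
  · simp
  · simp [h.ne', mem_Icc.mpr ⟨h, hw⟩]

theorem gamma'_eq_card {x : ℝ} (hx : 0 ≤ x) (n m : ℕ) :
    gamma' n m x = #{j ∈ Ioc 0 ⌊x⌋₊ | #(dvdIndices n j) = m} := by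
  have ih : ∀ k ∈ Icc (m + 1) n,
      gamma' n k x = #{j ∈ Ioc 0 ⌊x⌋₊ | #(dvdIndices n j) = k} :=
    fun k hk => gamma'_eq_card hx n k
  rw [gamma', sum_attach (Icc (m + 1) n) (fun k => (k.choose m : ℤ) * gamma' n k x),
    sum_congr rfl fun k hk => by rw [ih k hk], sum_mul_card_filter_eq, sigma'_eq_sum_choose hx,
    ← sum_sub_distrib, natCast_card_filter]
  exact sum_congr rfl fun j _ => choose_sub_ite_eq (card_dvdIndices_le n j)
termination_by n - m
decreasing_by have := mem_Icc.mp hk; omega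

lemma one_sub_add_ite_eq {w n : ℕ} (hw : w ≤ n) :
    1 - (w : ℤ) + (if w ∈ Icc 2 n then (w : ℤ) - 1 else 0) = if w = 0 then 1 else 0 := by
  rcases Nat.lt_or_ge w 2 with h | h
  · interval_cases w <;> simp
  · simp [mem_Icc.mpr ⟨h, hw⟩, show w ≠ 0 by omega]

theorem upsilon_eq_card_add {x : ℝ} (hx : 0 ≤ x) (n : ℕ) :
    upsilon n x = #{j ∈ Ioc 0 ⌊x⌋₊ | dvdIndices n j = ∅} + (n : ℤ) - 1 := by
  have hfloor : ⌊x⌋ = ∑ j ∈ Ioc 0 ⌊x⌋₊, (1 : ℤ) := by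
    simp [← Int.natCast_floor_eq_floor hx]
  have hcount : (#{j ∈ Ioc 0 ⌊x⌋₊ | dvdIndices n j = ∅} : ℤ)
      = ∑ j ∈ Ioc 0 ⌊x⌋₊, if #(dvdIndices n j) = 0 then 1 else 0 := by
    simp only [natCast_card_filter, card_eq_zero]
  simp_rw [upsilon, gamma'_eq_card hx, sigma'_eq_sum_choose hx, Nat.choose_one_right, hfloor,
    hcount]
  rw [sum_mul_card_filter_eq (f := fun k => (k : ℤ) - 1), ← sum_sub_distrib,
    ← sum_add_distrib]
  congr 2
  exact sum_congr rfl fun j _ => one_sub_add_ite_eq (card_dvdIndices_le n j)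

theorem filter_dvdIndices_eq_empty {n N : ℕ} (hn : 1 ≤ n) (hN₀ : 0 < N)
    (hN : N < nthPrime (n + 1) ^ 2) :
    {j ∈ Ioc 0 N | dvdIndices n j = ∅} = insert 1 {q ∈ Ioc (nthPrime n) N | q.Prime} := by
  ext j
  simp only [dvdIndices, filter_eq_empty_iff, mem_filter, mem_insert, mem_Ioc]
  constructor
  · rintro ⟨⟨hj0, hjN⟩, hndvd⟩
    refine or_iff_not_imp_left.mpr fun hj1 => ?_
    have hq := Nat.minFac_prime hj1
    have hlt : nthPrime n < j.minFac := by
      by_contra! hle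
      obtain ⟨k, hk, hkq⟩ := exists_nthPrime_eq_of_le hq hn hle
      exact hndvd hk (hkq ▸ Nat.minFac_dvd j)
    have hsq : j < j.minFac ^ 2 :=
      hjN.trans_lt (hN.trans_le (Nat.pow_le_pow_left (nthPrime_succ_le_of_lt hq hlt) 2))
    have hjp := Nat.prime_of_lt_minFac_sq (by omega) hsq
    exact ⟨⟨hjp.minFac_eq ▸ hlt, hjN⟩, hjp⟩
  · rintro (rfl | ⟨⟨hlt, hjN⟩, hjp⟩)
    · exact ⟨⟨one_pos, hN₀⟩,
        fun k _ hdvd => (nthPrime_prime k).one_lt.ne' (Nat.dvd_one.mp hdvd)⟩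
    · refine ⟨⟨hjp.pos, hjN⟩, fun k hk hdvd => ?_⟩
      have heq := (Nat.prime_dvd_prime_iff_eq (nthPrime_prime k) hjp).mp hdvd
      exact (heq ▸ hlt).not_ge (nthPrime_monotone (mem_Icc.mp hk).2)

theorem upsilon_eq_primePi
    (n : ℕ) (hn : 1 < n) (x : ℝ)
    (hx₁ : (nthPrime n : ℝ) < x) (hx₂ : x < (nthPrime (n + 1) : ℝ) ^ 2) :
    upsilon n x = (primePi x : ℤ) := by
  have hx : 0 ≤ x := (Nat.cast_nonneg _).trans hx₁.le
  have hN₁ : nthPrime n ≤ ⌊x⌋₊ := Nat.le_floor hx₁.le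
  have hN₀ : 0 < ⌊x⌋₊ := (nthPrime_prime n).pos.trans_le hN₁
  have hN₂ : ⌊x⌋₊ < nthPrime (n + 1) ^ 2 := by
    exact_mod_cast (Nat.floor_le hx).trans_lt hx₂
  have hπ : primePi x = Nat.primeCounting ⌊x⌋₊ := Nat.primesBelow_card_eq_primeCounting' _
  rw [upsilon_eq_card_add hx, filter_dvdIndices_eq_empty hn.le hN₀ hN₂,
    card_insert_of_notMem (by simp [Nat.not_prime_one]), hπ, primeCounting_eq_add_card hn.le hN₁]
  push_cast
  ring
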